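/- arXiv:2410.08027 — 2 statements merged into one kernel-verified Lean document; each statement's English description precedes it below -/
import Mathlib

section
/- With B = 2(1 − exp(−αA))/α, the second moment of the one-dimensional truncated Laplacian distribution satisfies ∫ x² f(x) dx = −(2/(αB))·A·exp(−αA)·(A + 2/α) + 2/α², and in particular is strictly less than 2/α². -/
open Real MeasureTheory

/-- Truncated Laplacian density on `[-A, A]`. -/
noncomputable def truncLapDensity (α A B x : ℝ) : ℝ :=
  if |x| ≤ A then (1 / B) * Real.exp (-α * |x|) else 0

/-! By symmetry the second moment is `(2 / B) ∫₀^A x² e^{-αx} dx`, which an explicit antiderivative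
evaluates to `(2 / B) (2 / α³ - e^{-αA} (A² / α + 2A / α² + 2 / α³))`. The normalisation
`e^{-αA} = 1 - αB / 2` turns the constant part into `2 / α²`, leaving a strictly negative
boundary term. -/

theorem intervalIntegral.integral_neg_eq_two_smul_of_even {E : Type*} [NormedAddCommGroup E]
    [NormedSpace ℝ E] {f : ℝ → E} (hf : ∀ x, f (-x) = f x) {a : ℝ}
    (hfi : IntervalIntegrable f volume 0 a) :
    ∫ x in -a..a, f x = (2 : ℝ) • ∫ x in 0..a, f x := by
  have hneg : ∫ x in -a..0, f x = ∫ x in 0..a, f x := by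
    simpa [hf] using intervalIntegral.integral_comp_neg (a := -a) (b := 0) f
  have hfi' : IntervalIntegrable f volume (-a) 0 := by
    simpa [hf] using (hfi.comp_sub_left 0).symm
  rw [← intervalIntegral.integral_add_adjacent_intervals hfi' hfi, hneg, two_smul]

theorem truncLapDensity_eq_indicator (α A B : ℝ) :
    truncLapDensity α A B = (Set.Icc (-A) A).indicator fun x => Real.exp (-α * |x|) / B := by
  ext x
  simp only [truncLapDensity, Set.indicator, Set.mem_Icc, ← abs_le]
  split_ifs <;> ring

theorem integral_mul_truncLapDensity {α A : ℝ} (B : ℝ) (hA : 0 ≤ A) (g : ℝ → ℝ) :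
    ∫ x, g x * truncLapDensity α A B x = ∫ x in -A..A, g x * Real.exp (-α * |x|) / B := by
  simp only [truncLapDensity_eq_indicator, ← Set.indicator_mul_right, mul_div_assoc]
  rw [integral_indicator measurableSet_Icc, integral_Icc_eq_integral_Ioc,
    intervalIntegral.integral_of_le (by linarith)]

theorem integral_mul_truncLapDensity_of_even {α A : ℝ} (B : ℝ) (hA : 0 ≤ A) {g : ℝ → ℝ}
    (hg : ∀ x, g (-x) = g x) (hgc : Continuous g) :
    ∫ x, g x * truncLapDensity α A B x = 2 / B * ∫ x in 0..A, g x * Real.exp (-α * x) := by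
  rw [integral_mul_truncLapDensity B hA, intervalIntegral.integral_neg_eq_two_smul_of_even
    (fun x => by simp [hg]) ((by fun_prop : Continuous _).intervalIntegrable _ _)]
  have habs : ∫ x in 0..A, g x * Real.exp (-α * |x|) = ∫ x in 0..A, g x * Real.exp (-α * x) :=
    intervalIntegral.integral_congr fun x hx => by
      rw [abs_of_nonneg (Set.uIcc_of_le hA ▸ hx).1]
  rw [smul_eq_mul, intervalIntegral.integral_div, habs]
  ring

theorem integral_sq_mul_exp_neg_mul {α : ℝ} (hα : α ≠ 0) (A : ℝ) :
    ∫ x in 0..A, x ^ 2 * Real.exp (-α * x)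
      = 2 / α ^ 3 - Real.exp (-α * A) * (A ^ 2 / α + 2 * A / α ^ 2 + 2 / α ^ 3) := by
  have hF : ∀ x, HasDerivAt
      (fun x => -Real.exp (-α * x) * (x ^ 2 / α + 2 * x / α ^ 2 + 2 / α ^ 3))
      (x ^ 2 * Real.exp (-α * x)) x := by
    intro x
    have hexp : HasDerivAt (fun x => -Real.exp (-α * x)) (α * Real.exp (-α * x)) x := by
      refine ((hasDerivAt_id x).const_mul (-α)).exp.neg.congr_deriv ?_
      simp only [id]
      ring
    have hpoly : HasDerivAt (fun x => x ^ 2 / α + 2 * x / α ^ 2 + 2 / α ^ 3)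
        (2 * x / α + 2 / α ^ 2) x := by
      refine ((((hasDerivAt_pow 2 x).div_const α).add
        (((hasDerivAt_id x).const_mul 2).div_const (α ^ 2))).add_const (2 / α ^ 3)).congr_deriv ?_
      norm_num
    refine (hexp.mul hpoly).congr_deriv ?_
    field_simp
    ring
  rw [intervalIntegral.integral_eq_sub_of_hasDerivAt (fun x _ => hF x)
    ((by fun_prop : Continuous fun x => x ^ 2 * Real.exp (-α * x)).intervalIntegrable _ _)]
  simp only [mul_zero, exp_zero, ne_eq, OfNat.ofNat_ne_zero, not_false_eq_true,
    zero_pow, zero_div, add_zero, neg_mul, one_mul]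
  ring

theorem truncLap_second_moment (α A : ℝ) (hα : 0 < α) (hA : 0 < A)
    (B : ℝ) (hB : B = 2 * (1 - Real.exp (-α * A)) / α) :
    (∫ x : ℝ, x ^ 2 * truncLapDensity α A B x)
      = -(2 / (α * B)) * A * Real.exp (-α * A) * (A + 2 / α) + 2 / α ^ 2 ∧
    (∫ x : ℝ, x ^ 2 * truncLapDensity α A B x) < 2 / α ^ 2 := by
  have hexp : Real.exp (-α * A) < 1 := Real.exp_lt_one_iff.mpr (by nlinarith)
  have hB0 : 0 < B := by rw [hB]; exact div_pos (by linarith) hα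
  have hmoment : ∫ x : ℝ, x ^ 2 * truncLapDensity α A B x
      = -(2 / (α * B)) * A * Real.exp (-α * A) * (A + 2 / α) + 2 / α ^ 2 := by
    rw [integral_mul_truncLapDensity_of_even B hA.le (fun x => by ring) (by fun_prop),
      integral_sq_mul_exp_neg_mul hα.ne']
    have hnorm : Real.exp (-α * A) = 1 - α * B / 2 := by
      rw [hB]; field_simp; ring
    rw [hnorm]
    field_simp
    ring
  refine ⟨hmoment, ?_⟩
  have hcorrection : 0 < 2 / (α * B) * A * Real.exp (-α * A) * (A + 2 / α) := by positivity
  linarith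
end

section
/- The variance (expected squared ℓ₂-norm of the noise) of the d-dimensional truncated Laplacian mechanism with per-coordinate parameters α = ε/Δ₁ is strictly less than 2d·Δ₁²/ε², which equals the expected squared ℓ₂-norm of the noise of the d-dimensional Laplacian mechanism with per-coordinate scale λ = Δ₁/ε. -/
open Real Set MeasureTheory

/-!
Per coordinate, the truncated Laplacian is the law of `±X` with `X` exponential of rate `α`
conditioned on `X ≤ A`. Since `(t²/α + 2t/α²) e^{-αt}` is an antiderivative of
`(2/α² - t²) e^{-αt}`, we get `∫₀ᴬ t² e^{-αt} < (2/α²) ∫₀ᴬ e^{-αt}` for `A > 0`, i.e. the second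
moment is strictly below the Laplacian value `2/α²`. The `d` coordinates are i.i.d., so the
expected squared norm is `d` times the second moment.
-/

open intervalIntegral

lemma integral_exp_neg_mul {α : ℝ} (hα : α ≠ 0) (A : ℝ) :
    ∫ x in (0 : ℝ)..A, exp (-α * x) = (1 - exp (-α * A)) / α := by
  rw [integral_comp_mul_left (fun x => exp x) (neg_ne_zero.mpr hα), integral_exp]
  simp only [mul_zero, exp_zero, smul_eq_mul]
  field_simp
  ring

lemma integral_sq_mul_exp_neg_mul_lt {α A : ℝ} (hα : 0 < α) (hA : 0 < A) :
    ∫ x in (0 : ℝ)..A, x ^ 2 * exp (-α * x) < 2 / α ^ 2 * ∫ x in (0 : ℝ)..A, exp (-α * x) := by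
  have hF : ∀ x, HasDerivAt (fun t => (t ^ 2 / α + 2 * t / α ^ 2) * exp (-α * t))
      ((2 / α ^ 2 - x ^ 2) * exp (-α * x)) x := by
    intro x
    have hlin : HasDerivAt (fun t : ℝ => -α * t) (-α) x := by
      simpa using (hasDerivAt_id x).const_mul (-α)
    have hpoly : HasDerivAt (fun t : ℝ => t ^ 2 / α + 2 * t / α ^ 2) (2 * x / α + 2 / α ^ 2) x := by
      refine (((hasDerivAt_pow 2 x).div_const α).add
        (((hasDerivAt_id x).const_mul 2).div_const (α ^ 2))).congr_deriv ?_
      simp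
    refine (hpoly.mul hlin.exp).congr_deriv ?_
    field_simp
    ring
  have hgap : ∫ x in (0 : ℝ)..A, (2 / α ^ 2 - x ^ 2) * exp (-α * x)
      = (A ^ 2 / α + 2 * A / α ^ 2) * exp (-α * A) := by
    rw [integral_eq_sub_of_hasDerivAt (fun x _ => hF x)
      (Continuous.intervalIntegrable (by fun_prop) _ _)]
    simp
  have hpos : 0 < (A ^ 2 / α + 2 * A / α ^ 2) * exp (-α * A) := by positivity
  rw [← intervalIntegral.integral_const_mul, ← sub_pos, ← integral_sub
    (Continuous.intervalIntegrable (by fun_prop) _ _)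
    (Continuous.intervalIntegrable (by fun_prop) _ _)]
  simpa only [← sub_mul, hgap] using hpos

section TruncatedLaplacian

variable {α A B : ℝ}

lemma truncLapDensity_nonneg (hB : 0 ≤ B) (x : ℝ) : 0 ≤ truncLapDensity α A B x := by
  unfold truncLapDensity
  split_ifs <;> positivity

lemma measurable_truncLapDensity : Measurable (truncLapDensity α A B) :=
  Measurable.ite (measurableSet_le (by fun_prop) measurable_const) (by fun_prop) measurable_const

lemma integral_truncLapDensity_mul_comp_abs (hA : 0 ≤ A) (g : ℝ → ℝ) :
    ∫ x, truncLapDensity α A B x * g |x| = 2 / B * ∫ x in (0 : ℝ)..A, g x * exp (-α * x) := by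
  have hind : ∀ t, (if t ≤ A then 1 / B * exp (-α * t) else 0) * g t
      = (Iic A).indicator (fun t => 1 / B * (g t * exp (-α * t))) t := by
    intro t
    simp only [indicator_apply, mem_Iic]
    split_ifs <;> ring
  unfold truncLapDensity
  simp only [hind]
  rw [integral_comp_abs (f := (Iic A).indicator _), setIntegral_indicator measurableSet_Iic,
    Ioi_inter_Iic, MeasureTheory.integral_const_mul, ← integral_of_le hA]
  ring

lemma integral_truncLapDensity_eq (hA : 0 ≤ A) :
    ∫ x, truncLapDensity α A B x = 2 / B * ∫ x in (0 : ℝ)..A, exp (-α * x) := by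
  simpa using integral_truncLapDensity_mul_comp_abs (α := α) (B := B) hA fun _ => 1

lemma truncLap_normalizer_pos (hα : 0 < α) (hA : 0 < A) : 0 < 2 * (1 - exp (-α * A)) / α := by
  have : exp (-α * A) < 1 := exp_lt_one_iff.mpr (by nlinarith)
  have : 0 < 1 - exp (-α * A) := by linarith
  positivity

lemma integral_truncLapDensity (hα : 0 < α) (hA : 0 < A)
    (hB : B = 2 * (1 - exp (-α * A)) / α) :
    ∫ x, truncLapDensity α A B x = 1 := by
  have hE : 1 - exp (-α * A) ≠ 0 := (sub_pos.mpr (exp_lt_one_iff.mpr (by nlinarith))).ne'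
  rw [integral_truncLapDensity_eq hA.le, integral_exp_neg_mul hα.ne', hB]
  generalize 1 - exp (-α * A) = c at *
  field_simp

noncomputable def truncLapMeasure (α A B : ℝ) : Measure ℝ :=
  volume.withDensity fun x => ENNReal.ofReal (truncLapDensity α A B x)

lemma integral_truncLapMeasure (hB : 0 ≤ B) (g : ℝ → ℝ) :
    ∫ x, g x ∂truncLapMeasure α A B = ∫ x, truncLapDensity α A B x * g x := by
  rw [truncLapMeasure, integral_withDensity_eq_integral_toReal_smul
    measurable_truncLapDensity.ennreal_ofReal (.of_forall fun _ => ENNReal.ofReal_lt_top)]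
  simp [ENNReal.toReal_ofReal (truncLapDensity_nonneg hB _)]

lemma isProbabilityMeasure_truncLapMeasure (hα : 0 < α) (hA : 0 < A)
    (hB : B = 2 * (1 - exp (-α * A)) / α) :
    IsProbabilityMeasure (truncLapMeasure α A B) := by
  have hmass := integral_truncLapDensity hα hA hB
  have hB0 : 0 < B := hB ▸ truncLap_normalizer_pos hα hA
  constructor
  rw [truncLapMeasure, withDensity_apply _ MeasurableSet.univ, Measure.restrict_univ,
    ← ofReal_integral_eq_lintegral_ofReal (.of_integral_ne_zero (by simp [hmass]))
      (.of_forall (truncLapDensity_nonneg hB0.le)), hmass, ENNReal.ofReal_one]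

lemma ae_abs_le_truncLapMeasure : ∀ᵐ x ∂truncLapMeasure α A B, |x| ≤ A := by
  rw [truncLapMeasure, ae_withDensity_iff measurable_truncLapDensity.ennreal_ofReal]
  refine .of_forall fun x hx => ?_
  by_contra h
  simp [truncLapDensity, h] at hx

lemma integrable_sq_truncLapMeasure [IsFiniteMeasure (truncLapMeasure α A B)] :
    Integrable (fun x => x ^ 2) (truncLapMeasure α A B) := by
  refine .of_bound (by fun_prop) (A ^ 2) ?_
  filter_upwards [ae_abs_le_truncLapMeasure] with x hx
  simpa [abs_pow] using pow_le_pow_left₀ (abs_nonneg x) hx 2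

lemma integral_sq_truncLapMeasure_lt (hα : 0 < α) (hA : 0 < A)
    (hB : B = 2 * (1 - exp (-α * A)) / α) :
    ∫ x, x ^ 2 ∂truncLapMeasure α A B < 2 / α ^ 2 := by
  have hB0 : 0 < B := hB ▸ truncLap_normalizer_pos hα hA
  calc ∫ x, x ^ 2 ∂truncLapMeasure α A B
      = ∫ x, truncLapDensity α A B x * |x| ^ 2 := by
        simp only [integral_truncLapMeasure hB0.le, sq_abs]
    _ = 2 / B * ∫ x in (0 : ℝ)..A, x ^ 2 * exp (-α * x) :=
        integral_truncLapDensity_mul_comp_abs hA.le (· ^ 2)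
    _ < 2 / B * (2 / α ^ 2 * ∫ x in (0 : ℝ)..A, exp (-α * x)) :=
        mul_lt_mul_of_pos_left (integral_sq_mul_exp_neg_mul_lt hα hA) (by positivity)
    _ = 2 / α ^ 2 * ∫ x, truncLapDensity α A B x := by
        rw [integral_truncLapDensity_eq hA.le]; ring
    _ = 2 / α ^ 2 := by rw [integral_truncLapDensity hα hA hB, mul_one]

end TruncatedLaplacian

lemma integral_sum_comp_eval_pi {ι X : Type*} [Fintype ι] [MeasurableSpace X]
    {μ : Measure X} [IsProbabilityMeasure μ] {f : X → ℝ} (hf : Integrable f μ) :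
    ∫ η : ι → X, ∑ i, f (η i) ∂Measure.pi (fun _ => μ) = Fintype.card ι * ∫ x, f x ∂μ := by
  have heval : ∀ i : ι, MeasurePreserving (Function.eval i) (Measure.pi fun _ => μ) μ :=
    measurePreserving_eval _
  have hcoord : ∀ i : ι, ∫ η : ι → X, f (η i) ∂Measure.pi (fun _ => μ) = ∫ x, f x ∂μ := by
    intro i
    have hf' : AEStronglyMeasurable f ((Measure.pi fun _ => μ).map (Function.eval i)) := by
      rw [(heval i).map_eq]; exact hf.aestronglyMeasurable
    exact (integral_map (heval i).measurable.aemeasurable hf').symm.trans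
      (by rw [(heval i).map_eq])
  rw [integral_finsetSum _ fun i _ => ?_]
  · simp [hcoord]
  · exact (heval i).integrable_comp_of_integrable hf

theorem truncLap_variance_lt_Laplace (d : ℕ) (hd : 1 ≤ d) (Δ₁ ε α A B : ℝ)
    (hΔ₁ : 0 < Δ₁) (hε : 0 < ε) (hα : α = ε / Δ₁) (hA : 0 < A)
    (hB : B = 2 * (1 - Real.exp (-α * A)) / α) :
    (∫ η : Fin d → ℝ, ∑ i, (η i) ^ 2
        ∂(Measure.pi fun _ : Fin d =>
          (volume : Measure ℝ).withDensity fun x => ENNReal.ofReal (truncLapDensity α A B x)))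
      < 2 * d * Δ₁ ^ 2 / ε ^ 2 := by
  have hα₀ : 0 < α := hα ▸ div_pos hε hΔ₁
  have := isProbabilityMeasure_truncLapMeasure hα₀ hA hB
  have hd₀ : (0 : ℝ) < d := by exact_mod_cast hd
  calc (∫ η : Fin d → ℝ, ∑ i, (η i) ^ 2 ∂Measure.pi fun _ => truncLapMeasure α A B)
      = d * ∫ x, x ^ 2 ∂truncLapMeasure α A B := by
        simpa using integral_sum_comp_eval_pi (ι := Fin d)
          (integrable_sq_truncLapMeasure (α := α) (A := A) (B := B))
    _ < d * (2 / α ^ 2) := mul_lt_mul_of_pos_left (integral_sq_truncLapMeasure_lt hα₀ hA hB) hd₀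
    _ = 2 * d * Δ₁ ^ 2 / ε ^ 2 := by subst hα; field_simp
end
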